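/- arXiv:0806.1325 — 2 statements merged into one kernel-verified Lean document; each statement's English description precedes it below -/
import Mathlib

section
/- For every y > α, H(y) > 0. -/
/-!
`H(α) = H'(α) = 0`, so it suffices that `H'' > 0` on `[α, ∞)`. Using `exp (z - α) ≥ 1`, `H''(z)` is at
least `exp (z - α) (β α^(β+1) + z^(β+1)) - β (β+1) z^β`, and `exp (z - α) ≥ (z/α)^β` (from `log x ≤ x - 1`
and `β ≤ α`) bounds this below by `z^β (β α + z - β² - β) > 0`, since `β < α ≤ z`.
-/

open Real

noncomputable def HFJ (α β : ℝ) (y : ℝ) : ℝ :=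
  β * α ^ (β + 1) * Real.exp (y - α) - β * α ^ (β + 1) - y ^ (β + 2)
    + y ^ (β + 1) * Real.exp (y - α) - y ^ (β + 1) + α ^ (β + 1) * y

open Set

theorem lt_of_hasDerivAt_pos {f f' : ℝ → ℝ} {a x : ℝ} (hf : ∀ z, a ≤ z → HasDerivAt f (f' z) z)
    (hf' : ∀ z, a < z → 0 < f' z) (hx : a < x) : f a < f x := by
  have hmono : StrictMonoOn f (Ici a) := by
    refine strictMonoOn_of_hasDerivWithinAt_pos (f' := f') (convex_Ici a)
      (fun z hz => (hf z hz).continuousAt.continuousWithinAt) (fun z hz => ?_) (fun z hz => ?_)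
    · rw [interior_Ici] at hz ⊢
      exact (hf z hz.le).hasDerivWithinAt
    · rw [interior_Ici] at hz
      exact hf' z hz
  exact hmono self_mem_Ici hx.le hx

theorem div_rpow_le_exp_sub {α β z : ℝ} (hα : 0 < α) (hβ : 0 ≤ β) (hβα : β ≤ α) (hz : α ≤ z) :
    (z / α) ^ β ≤ exp (z - α) := by
  have hzα : 0 ≤ z / α := div_nonneg (hα.le.trans hz) hα.le
  calc (z / α) ^ β ≤ exp (z / α - 1) ^ β := by
        gcongr
        linarith [add_one_le_exp (z / α - 1)]
    _ = exp (β / α * (z - α)) := by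
        rw [← exp_mul]
        congr 1
        field_simp
    _ ≤ exp (z - α) := by
        gcongr
        exact mul_le_of_le_one_left (by linarith) ((div_le_one hα).mpr hβα)

noncomputable def HFJ' (α β z : ℝ) : ℝ :=
  (β * α ^ (β + 1) + (β + 1) * z ^ β + z ^ (β + 1)) * exp (z - α)
    - (β + 2) * z ^ (β + 1) - (β + 1) * z ^ β + α ^ (β + 1)

noncomputable def HFJ'' (α β z : ℝ) : ℝ :=
  (β * α ^ (β + 1) + (β + 1) * β * z ^ (β - 1) + 2 * (β + 1) * z ^ β + z ^ (β + 1)) * exp (z - α)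
    - (β + 2) * (β + 1) * z ^ β - (β + 1) * β * z ^ (β - 1)

theorem hasDerivAt_exp_sub_const (α z : ℝ) :
    HasDerivAt (fun w => exp (w - α)) (exp (z - α)) z := by
  simpa using ((hasDerivAt_id z).sub_const α).exp

theorem hasDerivAt_HFJ (α β : ℝ) {z : ℝ} (hz : z ≠ 0) :
    HasDerivAt (HFJ α β) (HFJ' α β z) z := by
  have hpow₁ : HasDerivAt (fun w => w ^ (β + 1)) ((β + 1) * z ^ β) z := by
    simpa using hasDerivAt_rpow_const (p := β + 1) (Or.inl hz)
  have hpow₂ : HasDerivAt (fun w => w ^ (β + 2)) ((β + 2) * z ^ (β + 1)) z := by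
    simpa [show β + 2 - 1 = β + 1 by ring] using hasDerivAt_rpow_const (p := β + 2) (Or.inl hz)
  have hexp := hasDerivAt_exp_sub_const α z
  refine ((((((hexp.const_mul (β * α ^ (β + 1))).sub_const (β * α ^ (β + 1))).sub hpow₂).add
    (hpow₁.mul hexp)).sub hpow₁).add ((hasDerivAt_id z).const_mul (α ^ (β + 1)))).congr_deriv ?_
  rw [HFJ']
  ring

theorem hasDerivAt_HFJ' (α β : ℝ) {z : ℝ} (hz : z ≠ 0) :
    HasDerivAt (HFJ' α β) (HFJ'' α β z) z := by
  have hpow₀ : HasDerivAt (fun w => w ^ β) (β * z ^ (β - 1)) z :=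
    hasDerivAt_rpow_const (Or.inl hz)
  have hpow₁ : HasDerivAt (fun w => w ^ (β + 1)) ((β + 1) * z ^ β) z := by
    simpa using hasDerivAt_rpow_const (p := β + 1) (Or.inl hz)
  have hexp := hasDerivAt_exp_sub_const α z
  refine (((((((hpow₀.const_mul (β + 1)).const_add (β * α ^ (β + 1))).add hpow₁).mul hexp).sub
    (hpow₁.const_mul (β + 2))).sub (hpow₀.const_mul (β + 1))).add_const (α ^ (β + 1))).congr_deriv ?_
  rw [HFJ'', Pi.add_apply]
  ring

theorem HFJ_self {α : ℝ} (hα : α ≠ 0) (β : ℝ) : HFJ α β α = 0 := by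
  rw [HFJ, show β + 2 = β + 1 + 1 by ring, rpow_add_one hα (β + 1), sub_self, exp_zero]
  ring

theorem HFJ'_self (α β : ℝ) : HFJ' α β α = 0 := by
  rw [HFJ', sub_self, exp_zero]
  ring

theorem HFJ''_pos {α β z : ℝ} (hβ : 0 ≤ β) (hβα : β < α) (hz : α ≤ z) : 0 < HFJ'' α β z := by
  have hα : 0 < α := hβ.trans_lt hβα
  have hz₀ : 0 < z := hα.trans_le hz
  set E := exp (z - α)
  have hE : 1 ≤ E := one_le_exp (by linarith)
  have hzβ : 0 < z ^ β := rpow_pos_of_pos hz₀ β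
  have hzβ₁ : 0 ≤ z ^ (β - 1) := (rpow_pos_of_pos hz₀ _).le
  have hzβ' : z ^ (β + 1) = z ^ β * z := rpow_add_one hz₀.ne' β
  have hkey : α * z ^ β ≤ α ^ (β + 1) * E := by
    have h := div_rpow_le_exp_sub hα hβ hβα.le hz
    rw [div_rpow hz₀.le hα.le, div_le_iff₀ (rpow_pos_of_pos hα β)] at h
    rw [rpow_add_one hα.ne']
    nlinarith
  have hlin : 0 < z ^ β * (β * α + z - β * β - β) :=
    mul_pos hzβ (by nlinarith)
  -- `HFJ'' α β z = (E - 1) ((β + 1) β z^(β-1) + 2 (β + 1) z^β) + E (β α^(β+1) + z^(β+1)) - β (β + 1) z^β`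
  rw [HFJ'']
  nlinarith [mul_le_mul_of_nonneg_left hkey hβ, mul_nonneg (mul_nonneg hβ hzβ₁) (sub_nonneg.2 hE),
    mul_nonneg hzβ.le (sub_nonneg.2 hE), mul_nonneg (mul_nonneg hzβ.le hz₀.le) (sub_nonneg.2 hE)]

theorem stmt_10 (α β : ℝ) (hβ : 0 ≤ β) (hαβ : β < α) (y : ℝ) (hy : α < y) :
    0 < HFJ α β y := by
  have hα : 0 < α := hβ.trans_lt hαβ
  have hderiv : ∀ z, α < z → 0 < HFJ' α β z := by
    intro z hz
    simpa [HFJ'_self] using lt_of_hasDerivAt_pos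
      (fun w hw => hasDerivAt_HFJ' α β (hα.trans_le hw).ne')
      (fun w hw => HFJ''_pos hβ hαβ hw.le) hz
  simpa [HFJ_self hα.ne'] using lt_of_hasDerivAt_pos
    (fun w hw => hasDerivAt_HFJ α β (hα.trans_le hw).ne') hderiv hy
end

section
/- For every s > 0, f''(s) + s·f'''(s) − s·(f''(s))² / f'(s) < 0. -/
/-!
Write `f' s = c * N s / s` with `c > 0`, `U = α + log (1 + s)` and
`N s = U ^ (β + 1) - α ^ (β + 1)`. The left-hand side then collapses to
`c * (N'' + N' / s - N' ^ 2 / N)`, whose sign is that of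
`N * (s * β + U) - s * (β + 1) * U ^ (β + 1)`. With `L = log (1 + s)` its negativity becomes
`(α + L) * N < (exp L - 1) * (N + (β + 1) * α ^ (β + 1))`, i.e. the positivity of
`(exp L - 1) / (α + L) - N / (N + (β + 1) * α ^ (β + 1))`. That function vanishes at `L = 0`
and increases: its derivative is positive by weighted AM-GM together with
`α * (1 + L / α) ^ β ≤ α * exp (β * L / α) < exp L * (α + L - 1) + 1`, the last inequality
because `β < α` gives `exp (β * L / α) ≤ exp L`.
-/

open Real

noncomputable def fFJ (α β : ℝ) (s : ℝ) : ℝ :=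
  (1 / ((β + 1) * α ^ β)) * ∫ x in (0:ℝ)..s, ((α + Real.log (1 + x)) ^ (β + 1) - α ^ (β + 1)) / x

open Filter Set MeasureTheory

theorem rpow_add_one_add_mul_sub_le {a b p : ℝ} (ha : 0 < a) (hb : 0 ≤ b) (hp : 0 ≤ p) :
    a ^ (p + 1) + (p + 1) * a ^ p * (b - a) ≤ b ^ (p + 1) := by
  have hbern : 1 + (p + 1) * (b / a - 1) ≤ (1 + (b / a - 1)) ^ (p + 1) :=
    one_add_mul_self_le_rpow_one_add (by linarith [div_nonneg hb ha.le]) (by linarith)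
  rw [add_sub_cancel, div_rpow hb ha.le, le_div_iff₀ (by positivity)] at hbern
  calc a ^ (p + 1) + (p + 1) * a ^ p * (b - a)
      = (1 + (p + 1) * (b / a - 1)) * a ^ (p + 1) := by
        rw [rpow_add_one ha.ne']; field_simp
    _ ≤ b ^ (p + 1) := hbern

theorem pos_of_hasDerivAt_of_map_zero {φ φ' : ℝ → ℝ} (h0 : φ 0 = 0)
    (hφ : ∀ x, 0 ≤ x → HasDerivAt φ (φ' x) x) (hφ' : ∀ x, 0 < x → 0 < φ' x)
    {x : ℝ} (hx : 0 < x) : 0 < φ x := by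
  have hmono : StrictMonoOn φ (Ici 0) := by
    refine strictMonoOn_of_hasDerivWithinAt_pos (convex_Ici 0)
      (fun y hy => (hφ y hy).continuousAt.continuousWithinAt) (f' := φ') ?_ ?_
    · intro y hy
      rw [interior_Ici] at hy
      exact (hφ y (le_of_lt hy)).hasDerivWithinAt
    · intro y hy
      rw [interior_Ici] at hy
      exact hφ' y hy
  simpa [h0] using hmono self_mem_Ici hx.le hx

theorem deriv_combination_eq_of_hasDerivAt_mul_div {F N N' N'' : ℝ → ℝ} {c s : ℝ}
    (hs : 0 < s) (hc : c ≠ 0) (hNs : N s ≠ 0)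
    (hF : ∀ x, 0 < x → HasDerivAt F (c * (N x / x)) x)
    (hN : ∀ x, 0 < x → HasDerivAt N (N' x) x) (hN' : ∀ x, 0 < x → HasDerivAt N' (N'' x) x) :
    deriv (deriv F) s + s * deriv (deriv (deriv F)) s - s * deriv (deriv F) s ^ 2 / deriv F s
      = c * (N'' s + N' s / s - N' s ^ 2 / N s) := by
  have hF1 : ∀ x, 0 < x → deriv F x = c * (N x / x) := fun x hx => (hF x hx).deriv
  have hF2 : ∀ x, 0 < x → HasDerivAt (deriv F) (c * ((N' x * x - N x) / x ^ 2)) x :=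
    fun x hx => by
      have h := ((hN x hx).div (hasDerivAt_id x) hx.ne').const_mul c
      simp only [id, mul_one] at h
      exact h.congr_of_eventuallyEq (eventually_of_mem (Ioi_mem_nhds hx) hF1)
  have hF3 := ((((hN' s hs).mul (hasDerivAt_id s)).sub (hN s hs)).div
    (hasDerivAt_pow 2 s) (by positivity) |>.const_mul c).congr_of_eventuallyEq
      (eventually_of_mem (Ioi_mem_nhds hs) fun x hx => (hF2 x hx).deriv)
  rw [hF3.deriv, (hF2 s hs).deriv, hF1 s hs]
  simp only [Pi.mul_apply, Pi.sub_apply, id, mul_one]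
  field_simp
  ring

section KeyInequality

variable {α β : ℝ}

theorem mul_rpow_mul_le_rpow_add_mul (hα : 0 < α) (hβ : 0 ≤ β) {u : ℝ} (hu : 0 ≤ u) :
    (β + 1) * α ^ β * u ≤ u ^ (β + 1) + β * α ^ (β + 1) := by
  have := rpow_add_one_add_mul_sub_le hα hu hβ
  rw [rpow_add_one hα.ne'] at this ⊢
  linarith

theorem mul_exp_lt (hβ : 0 ≤ β) (hαβ : β < α) {L : ℝ} (hL : 0 < L) :
    α * exp (β * L / α) < exp L * (α + L - 1) + 1 := by
  have hα : 0 < α := hβ.trans_lt hαβ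
  have key := pos_of_hasDerivAt_of_map_zero
    (φ := fun L => exp L * (α + L - 1) + 1 - α * exp (β * L / α))
    (φ' := fun L => exp L * (α + L) - β * exp (β * L / α)) (by simp) ?_ ?_ hL
  · simpa using key
  · intro x _
    have h := (((hasDerivAt_exp x).mul (((hasDerivAt_id x).const_add α).sub_const 1)).add_const
      1).sub (((((hasDerivAt_id x).const_mul β).div_const α).exp).const_mul α)
    refine h.congr_deriv ?_
    simp only [id, mul_one]
    field_simp
    ring
  · intro x hx
    have hexp : exp (β * x / α) ≤ exp x :=
      exp_le_exp.mpr ((div_le_iff₀ hα).mpr (by nlinarith))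
    nlinarith [exp_pos (β * x / α), exp_pos x]

theorem mul_one_add_div_rpow_lt (hβ : 0 ≤ β) (hαβ : β < α) {L : ℝ} (hL : 0 < L) :
    α * (1 + L / α) ^ β < exp L * (α + L - 1) + 1 := by
  have hα : 0 < α := hβ.trans_lt hαβ
  refine lt_of_le_of_lt (mul_le_mul_of_nonneg_left ?_ hα.le) (mul_exp_lt hβ hαβ hL)
  calc (1 + L / α) ^ β ≤ exp (L / α) ^ β := by
        gcongr
        linarith [add_one_le_exp (L / α)]
    _ = exp (β * L / α) := by rw [← exp_mul]; ring_nf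

theorem sq_mul_rpow_lt_mul_sq (hβ : 0 ≤ β) (hαβ : β < α) {L : ℝ} (hL : 0 < L) :
    (β + 1) ^ 2 * (α + L) ^ β * α ^ (β + 1) * (α + L) ^ 2
      < (exp L * (α + L - 1) + 1) * ((α + L) ^ (β + 1) + β * α ^ (β + 1)) ^ 2 := by
  have hα : 0 < α := hβ.trans_lt hαβ
  have hE := mul_one_add_div_rpow_lt hβ hαβ hL
  have hAMGM := mul_rpow_mul_le_rpow_add_mul hα hβ (by linarith : 0 ≤ α + L)
  have hαβpos : 0 < α ^ β := rpow_pos_of_pos hα β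
  have hpow : (1 + L / α) ^ β * α ^ β = (α + L) ^ β := by
    rw [show 1 + L / α = (α + L) / α by field_simp, div_rpow (by linarith) hα.le]
    field_simp
  calc (β + 1) ^ 2 * (α + L) ^ β * α ^ (β + 1) * (α + L) ^ 2
      = α * (1 + L / α) ^ β * ((β + 1) * α ^ β * (α + L)) ^ 2 := by
        rw [← hpow, rpow_add_one hα.ne']; ring
    _ < (exp L * (α + L - 1) + 1) * ((β + 1) * α ^ β * (α + L)) ^ 2 := by
        gcongr
    _ ≤ (exp L * (α + L - 1) + 1) * ((α + L) ^ (β + 1) + β * α ^ (β + 1)) ^ 2 := by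
        have : 0 < α * (1 + L / α) ^ β := by positivity
        gcongr
        linarith

theorem mul_rpow_sub_rpow_lt_exp_sub_one_mul (hβ : 0 ≤ β) (hαβ : β < α) {L : ℝ}
    (hL : 0 < L) :
    (α + L) * ((α + L) ^ (β + 1) - α ^ (β + 1))
      < (exp L - 1) * ((α + L) ^ (β + 1) + β * α ^ (β + 1)) := by
  have hα : 0 < α := hβ.trans_lt hαβ
  set D : ℝ → ℝ := fun x => (α + x) ^ (β + 1) + β * α ^ (β + 1) with hD
  have hDpos : ∀ x, 0 ≤ x → 0 < D x := fun x hx => by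
    have := mul_rpow_mul_le_rpow_add_mul hα hβ (by linarith : 0 ≤ α + x)
    have : 0 < (β + 1) * α ^ β * (α + x) := by have := rpow_pos_of_pos hα β; positivity
    linarith
  have hpow : ∀ x, 0 ≤ x →
      HasDerivAt (fun y => (α + y) ^ (β + 1)) ((β + 1) * (α + x) ^ β) x := fun x hx => by
    simpa using ((hasDerivAt_id x).const_add α).rpow_const (p := β + 1)
      (Or.inl (by simp; linarith))
  have hΦ := pos_of_hasDerivAt_of_map_zero
    (φ := fun x => (exp x - 1) / (α + x) - ((α + x) ^ (β + 1) - α ^ (β + 1)) / D x)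
    (φ' := fun x => (exp x * (α + x - 1) + 1) / (α + x) ^ 2
      - (β + 1) ^ 2 * (α + x) ^ β * α ^ (β + 1) / D x ^ 2) (by simp) ?_ ?_ hL
  · have hαL : 0 < α + L := by linarith
    rw [sub_pos, div_lt_div_iff₀ (hDpos L hL.le) hαL] at hΦ
    linarith
  · intro x hx
    have h := (((hasDerivAt_exp x).sub_const 1).div ((hasDerivAt_id x).const_add α)
      (by simp; linarith)).sub (((hpow x hx).sub_const (α ^ (β + 1))).div
        ((hpow x hx).add_const (β * α ^ (β + 1))) (hDpos x hx).ne')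
    refine h.congr_deriv ?_
    simp only [hD, id]
    ring
  · intro x hx
    rw [sub_pos, div_lt_div_iff₀ (by have := hDpos x hx.le; positivity) (by positivity)]
    exact sq_mul_rpow_lt_mul_sq hβ hαβ hx

end KeyInequality

noncomputable def fFJNum (α β x : ℝ) : ℝ :=
  (α + log (1 + x)) ^ (β + 1) - α ^ (β + 1)

noncomputable def fFJNum' (α β x : ℝ) : ℝ :=
  (β + 1) * (α + log (1 + x)) ^ β / (1 + x)

noncomputable def fFJNum'' (α β x : ℝ) : ℝ :=
  (β + 1) * (α + log (1 + x)) ^ (β - 1) * (β - (α + log (1 + x))) / (1 + x) ^ 2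

section Numerator

variable {α β : ℝ}

theorem hasDerivAt_const_add_log_one_add {x : ℝ} (hx : -1 < x) :
    HasDerivAt (fun y => α + log (1 + y)) (1 / (1 + x)) x := by
  simpa using (((hasDerivAt_id x).const_add 1).log (by simp; linarith)).const_add α

theorem hasDerivAt_fFJNum (hβ : 0 ≤ β) {x : ℝ} (hx : -1 < x) :
    HasDerivAt (fFJNum α β) (fFJNum' α β x) x := by
  have h := ((hasDerivAt_const_add_log_one_add (α := α) hx).rpow_const
    (p := β + 1) (Or.inr (by linarith))).sub_const (α ^ (β + 1))
  refine h.congr_deriv ?_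
  rw [fFJNum', add_sub_cancel_right]
  ring

theorem hasDerivAt_fFJNum' (hα : 0 ≤ α) {x : ℝ} (hx : 0 < x) :
    HasDerivAt (fFJNum' α β) (fFJNum'' α β x) x := by
  have hU : 0 < α + log (1 + x) := by linarith [log_pos (by linarith : 1 < 1 + x)]
  have h := (((hasDerivAt_const_add_log_one_add (α := α) (by linarith : -1 < x)).rpow_const
    (p := β) (Or.inl hU.ne')).const_mul (β + 1)).div ((hasDerivAt_id x).const_add 1)
      (by simp; linarith)
  refine h.congr_deriv ?_
  simp only [fFJNum'', rpow_sub_one hU.ne', id, mul_one]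
  field_simp

theorem fFJNum_pos (hα : 0 ≤ α) (hβ : 0 ≤ β) {x : ℝ} (hx : 0 < x) :
    0 < fFJNum α β x := by
  rw [fFJNum, sub_pos]
  exact rpow_lt_rpow hα (by linarith [log_pos (by linarith : 1 < 1 + x)]) (by linarith)

theorem fFJNum_le (hα : 0 < α) (hβ : 0 ≤ β) {x : ℝ} (hx : 0 ≤ x) :
    fFJNum α β x ≤ (β + 1) * (α + x) ^ β * x := by
  have hlog : 0 ≤ log (1 + x) := log_nonneg (by linarith)
  have hlog_le : log (1 + x) ≤ x := by
    linarith [log_le_sub_one_of_pos (by linarith : 0 < 1 + x)]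
  have hU : 0 < α + log (1 + x) := by linarith
  have htangent := rpow_add_one_add_mul_sub_le hU hα.le hβ
  calc fFJNum α β x ≤ (β + 1) * (α + log (1 + x)) ^ β * log (1 + x) := by
        rw [fFJNum]; linarith
    _ ≤ (β + 1) * (α + x) ^ β * x := by gcongr

end Numerator

section Integral

variable {α β : ℝ}

theorem continuousOn_fFJNum_div (hβ : 0 ≤ β) :
    ContinuousOn (fun x => fFJNum α β x / x) (Ioi 0) := fun x hx =>
  ((hasDerivAt_fFJNum hβ (by linarith [mem_Ioi.mp hx])).continuousAt.continuousWithinAt).div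
    continuousWithinAt_id (ne_of_gt hx)

theorem intervalIntegrable_fFJNum_div (hα : 0 < α) (hβ : 0 ≤ β) {t : ℝ} (ht : 0 ≤ t) :
    IntervalIntegrable (fun x => fFJNum α β x / x) volume 0 t := by
  rw [intervalIntegrable_iff_integrableOn_Ioc_of_le ht]
  refine Integrable.mono' (g := fun _ => (β + 1) * (α + t) ^ β)
    (integrableOn_const measure_Ioc_lt_top.ne)
    (((continuousOn_fFJNum_div hβ).mono Ioc_subset_Ioi_self).aestronglyMeasurable
      measurableSet_Ioc) ?_
  filter_upwards [ae_restrict_mem measurableSet_Ioc] with x ⟨hx, hxt⟩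
  rw [norm_div, norm_of_nonneg (fFJNum_pos hα.le hβ hx).le, norm_of_nonneg hx.le,
    div_le_iff₀ hx]
  calc fFJNum α β x ≤ (β + 1) * (α + x) ^ β * x := fFJNum_le hα hβ hx.le
    _ ≤ (β + 1) * (α + t) ^ β * x := by gcongr

theorem hasDerivAt_fFJ (hα : 0 < α) (hβ : 0 ≤ β) {t : ℝ} (ht : 0 < t) :
    HasDerivAt (fFJ α β) (1 / ((β + 1) * α ^ β) * (fFJNum α β t / t)) t := by
  have hcont := continuousOn_fFJNum_div (α := α) hβ
  exact (intervalIntegral.integral_hasDerivAt_right (intervalIntegrable_fFJNum_div hα hβ ht.le)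
    (hcont.stronglyMeasurableAtFilter isOpen_Ioi t ht)
    (hcont.continuousAt (Ioi_mem_nhds ht))).const_mul _

end Integral

theorem fFJNum_combination_neg {α β s : ℝ} (hβ : 0 ≤ β) (hαβ : β < α) (hs : 0 < s) :
    fFJNum'' α β s + fFJNum' α β s / s - fFJNum' α β s ^ 2 / fFJNum α β s < 0 := by
  have hα : 0 < α := hβ.trans_lt hαβ
  have hlog : 0 < log (1 + s) := log_pos (by linarith)
  have hN := fFJNum_pos hα.le hβ hs
  set U := α + log (1 + s) with hU
  have hUpos : 0 < U := by linarith
  have hstar := mul_rpow_sub_rpow_lt_exp_sub_one_mul hβ hαβ hlog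
  rw [exp_log (by linarith), add_sub_cancel_left, ← hU] at hstar
  have hkey : fFJNum α β s * (s * β + U) - s * ((β + 1) * U ^ (β + 1)) < 0 := by
    rw [fFJNum, ← hU]
    linear_combination hstar
  have hpow : U ^ β = U ^ (β - 1) * U := by rw [← rpow_add_one hUpos.ne']; ring_nf
  have hpow' : U ^ (β + 1) = U ^ (β - 1) * U * U := by rw [rpow_add_one hUpos.ne', hpow]
  have hZ : 0 < U ^ (β - 1) := rpow_pos_of_pos hUpos _
  have hsum : fFJNum'' α β s + fFJNum' α β s / s - fFJNum' α β s ^ 2 / fFJNum α β s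
      = (β + 1) * U ^ (β - 1) / ((1 + s) ^ 2 * s * fFJNum α β s)
        * (fFJNum α β s * (s * β + U) - s * ((β + 1) * U ^ (β + 1))) := by
    simp only [fFJNum', fFJNum'', ← hU, hpow', hpow]
    field_simp
    ring
  rw [hsum]
  exact mul_neg_of_pos_of_neg (by positivity) hkey

theorem stmt_12 (α β : ℝ) (hβ : 0 ≤ β) (hαβ : β < α) (s : ℝ) (hs : 0 < s) :
    deriv (deriv (fFJ α β)) s + s * deriv (deriv (deriv (fFJ α β))) s
      - s * (deriv (deriv (fFJ α β)) s) ^ 2 / deriv (fFJ α β) s < 0 := by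
  have hα : 0 < α := hβ.trans_lt hαβ
  have hc : 0 < 1 / ((β + 1) * α ^ β) := by have := rpow_pos_of_pos hα β; positivity
  rw [deriv_combination_eq_of_hasDerivAt_mul_div hs hc.ne' (fFJNum_pos hα.le hβ hs).ne'
    (fun x hx => hasDerivAt_fFJ hα hβ hx) (fun x hx => hasDerivAt_fFJNum hβ (by linarith))
    (fun x hx => hasDerivAt_fFJNum' hα.le hx)]
  exact mul_neg_of_pos_of_neg hc (fFJNum_combination_neg hβ hαβ hs)
end
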